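/- Let x, t, r, y be integers with 2 ≤ t ≤ x, r ≥ 0, and x + r ≤ y - t + 1. If A = [0, x-1] ∪ [x+r, y] and h ≥ (r + t - 1)/(t - 1), then the h-fold sumset hA equals [0, hy]. -/
import Mathlib

open Finset Pointwise

/-- The `h`-fold sumset: all sums of `h` elements of `A` (with repetition). -/
def hfold : ℕ → Finset ℤ → Finset ℤ
  | 0, _ => {0}
  | n + 1, A => A + hfold n A

lemma myIcc_add_Icc (a b c d : ℤ) (hab : a ≤ b) (hcd : c ≤ d) :
    Icc a b + Icc c d = Icc (a + c) (b + d) := by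
  ext z
  simp only [Finset.mem_add, mem_Icc]
  constructor
  · rintro ⟨u, ⟨hu1, hu2⟩, v, ⟨hv1, hv2⟩, rfl⟩
    omega
  · rintro ⟨h1, h2⟩
    exact ⟨max a (z - d), by omega, z - max a (z - d), by omega, by omega⟩

lemma hfold_add (m n : ℕ) (A : Finset ℤ) :
    hfold (m + n) A = hfold m A + hfold n A := by
  induction m with
  | zero => rw [Nat.zero_add]; show _ = ({0} : Finset ℤ) + _
            rw [show ({0} : Finset ℤ) = 0 from rfl, zero_add]
  | succ k ih =>
    rw [Nat.succ_add]
    simp only [hfold]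
    rw [ih, add_assoc]

lemma hfold_mono (n : ℕ) {A B : Finset ℤ} (hAB : A ⊆ B) :
    hfold n A ⊆ hfold n B := by
  induction n with
  | zero => simp [hfold]
  | succ k ih => exact Finset.add_subset_add hAB ih

lemma hfold_Icc (n : ℕ) (a b : ℤ) (hab : a ≤ b) :
    hfold n (Icc a b) = Icc ((n : ℤ) * a) ((n : ℤ) * b) := by
  induction n with
  | zero => simp [hfold]
  | succ k ih =>
    simp only [hfold, ih]
    rw [myIcc_add_Icc a b _ _ hab (mul_le_mul_of_nonneg_left hab (by positivity))]
    congr 1 <;> push_cast <;> ring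

theorem stmt3 (x t r y : ℤ) (h : ℕ) (ht2 : 2 ≤ t) (htx : t ≤ x)
    (hr : 0 ≤ r) (hxy : x + r ≤ y - t + 1) (A : Finset ℤ)
    (hA : A = Icc 0 (x - 1) ∪ Icc (x + r) y)
    (hh : ((r : ℚ) + (t : ℚ) - 1) / ((t : ℚ) - 1) ≤ (h : ℚ)) :
    hfold h A = Icc 0 ((h : ℤ) * y) := by
  have ht1 : (0 : ℚ) < (t : ℚ) - 1 := by
    have : (2 : ℚ) ≤ (t : ℚ) := by exact_mod_cast ht2
    linarith
  rw [div_le_iff₀ ht1] at hh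
  have hZ : r + t - 1 ≤ (h : ℤ) * (t - 1) := by exact_mod_cast hh
  have hxr : 0 < x + r := by omega
  have hy : x + r ≤ y := by omega
  have hsub1 : Icc 0 (x - 1) ⊆ A := hA ▸ Finset.subset_union_left
  have hsub2 : Icc (x + r) y ⊆ A := hA ▸ Finset.subset_union_right
  have hh1 : 1 ≤ h := by
    rcases Nat.eq_zero_or_pos h with h0 | h1
    · subst h0; simp at hZ; omega
    · exact h1
  apply Finset.Subset.antisymm
  · -- upper inclusion
    have hAy : A ⊆ Icc 0 y := by
      rw [hA]
      apply Finset.union_subset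
      · exact Icc_subset_Icc le_rfl (by omega)
      · exact Icc_subset_Icc (by omega) le_rfl
    have := hfold_mono h hAy
    rwa [hfold_Icc h 0 y (by omega), mul_zero] at this
  · intro z hz
    rw [mem_Icc] at hz
    obtain ⟨hz0, hzh⟩ := hz
    set k0 : ℤ := z / (x + r) with hk0def
    have hmod := Int.mul_ediv_add_emod z (x + r)
    have hm0 : 0 ≤ z % (x + r) := Int.emod_nonneg z (by omega)
    have hm1 : z % (x + r) < x + r := Int.emod_lt_of_pos z hxr
    have hk00 : 0 ≤ k0 := Int.ediv_nonneg hz0 (le_of_lt hxr)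
    set k : ℤ := min (h : ℤ) k0 with hkdef
    have hk0 : 0 ≤ k := le_min (by exact_mod_cast Nat.zero_le h) hk00
    have hkh : k ≤ (h : ℤ) := min_le_left _ _
    have hk1 : k * (x + r) ≤ z := by
      rcases le_or_gt (h : ℤ) k0 with hc | hc
      · have hkeq : k = (h : ℤ) := min_eq_left hc
        nlinarith [mul_le_mul_of_nonneg_right hc (le_of_lt hxr)]
      · have hkeq : k = k0 := min_eq_right (le_of_lt hc)
        nlinarith
    have hk2 : z ≤ k * y + ((h : ℤ) - k) * (x - 1) := by
      rcases le_or_gt (h : ℤ) k0 with hc | hc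
      · have hkeq : k = (h : ℤ) := min_eq_left hc
        rw [hkeq]; simp; linarith
      · have hkeq : k = k0 := min_eq_right (le_of_lt hc)
        have hd : 1 ≤ (h : ℤ) - k := by omega
        have hle : z ≤ k * (x + r) + (x + r) - 1 := by nlinarith
        nlinarith [mul_nonneg hk0 (show (0:ℤ) ≤ y - x - r - (t - 1) by omega),
          mul_nonneg (show (0:ℤ) ≤ (h : ℤ) - k - 1 by omega)
            (show (0:ℤ) ≤ x - t by omega)]
    set K : ℕ := k.toNat with hKdef
    have hKcast : (K : ℤ) = k := Int.toNat_of_nonneg hk0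
    have hKh : K ≤ h := by omega
    have hhK : ((h - K : ℕ) : ℤ) = (h : ℤ) - k := by omega
    have e1 : hfold K (Icc (x + r) y) = Icc (k * (x + r)) (k * y) := by
      rw [hfold_Icc K (x + r) y hy, hKcast]
    have e2 : hfold (h - K) (Icc 0 (x - 1)) = Icc 0 (((h : ℤ) - k) * (x - 1)) := by
      rw [hfold_Icc (h - K) 0 (x - 1) (by omega), hhK, mul_zero]
    have hmem : z ∈ hfold K (Icc (x + r) y) + hfold (h - K) (Icc 0 (x - 1)) := by
      rw [e1, e2, myIcc_add_Icc _ _ _ _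
        (mul_le_mul_of_nonneg_left (by omega) hk0)
        (mul_nonneg (by omega) (by omega))]
      rw [mem_Icc]
      constructor <;> linarith
    have hsubset : hfold K (Icc (x + r) y) + hfold (h - K) (Icc 0 (x - 1)) ⊆ hfold h A := by
      have := Finset.add_subset_add (hfold_mono K hsub2) (hfold_mono (h - K) hsub1)
      rw [← hfold_add K (h - K) A, Nat.add_sub_cancel' hKh] at this
      exact this
    exact hsubset hmem
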